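/- arXiv:1403.0780 — 2 statements merged into one kernel-verified Lean document; each statement's English description precedes it below -/
import Mathlib

section
/- Let K be a positive integer, let (αₙ) be a sequence of real skew-symmetric K×K matrices converging in matrix norm to a skew-symmetric matrix α, and assume the sequence is non-degenerating: there exists N such that for every n ≥ N, every 2π-periodic continuously differentiable map u: ℝ → ℝ^K satisfying u' + α·u = 0 also satisfies u' + αₙ·u = 0. Then there exist a constant C > 0 and an index N' such that for all n ≥ N' and every twice continuously differentiable 2π-periodic map u: ℝ → ℝ^K one has ∫₀^{2π} ‖u'(θ) + αₙ·u(θ)‖² dθ ≤ C ∫₀^{2π} ‖u''(θ) + 2αₙ·u'(θ) + αₙ²·u(θ)‖² dθ. -/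
open Real MeasureTheory Filter
open scoped Matrix RealInnerProductSpace

/-- The action of a `K × K` real matrix on `ℝ^K` (with the Euclidean norm). -/
noncomputable def matAct {K : ℕ} (α : Matrix (Fin K) (Fin K) ℝ)
    (x : EuclideanSpace ℝ (Fin K)) : EuclideanSpace ℝ (Fin K) :=
  Matrix.toEuclideanLin α x

/-!
Gauge the connection away. For `v = u' + B u` put `w θ = exp (θ • B) (v θ)`. As `B` is
skew-adjoint, `exp (θ • B)` is an isometry, so `‖w‖ = ‖u' + B u‖` and
`‖w'‖ = ‖u'' + 2 B u' + B² u‖`. Periodicity of `u` gives `w (2π) = M (w 0)` for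
`M = exp (2π • B)`, and `∫ w = M (u 0) - u 0` is orthogonal to the fixed space of `M`. Such a `w`
obeys an elementary Poincaré inequality whose constant depends only on a lower bound `δ` for
`‖M x - x‖ / ‖x‖` on the orthogonal complement of the fixed space. Non-degeneracy implies that the
fixed space of `exp (2π • α)` lies in that of `exp (2π • Aₙ)`, so the bound `δ` for `exp (2π • α)`
passes, halved, to `exp (2π • Aₙ)` as soon as the two are `δ / 2`-close.
-/

open Set

theorem Function.Periodic.deriv {𝕜 F : Type*} [NontriviallyNormedField 𝕜] [NormedAddCommGroup F]
    [NormedSpace 𝕜 F] {f : 𝕜 → F} {c : 𝕜} (hf : Function.Periodic f c) :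
    Function.Periodic (deriv f) c := fun x => by
  rw [← deriv_comp_add_const, funext hf]

theorem sq_intervalIntegral_le_mul {f : ℝ → ℝ} (hf : Continuous f) {a b : ℝ} (hab : a ≤ b) :
    (∫ x in a..b, f x) ^ 2 ≤ (b - a) * ∫ x in a..b, f x ^ 2 := by
  rcases hab.eq_or_lt with rfl | hab
  · simp
  have hba : 0 < b - a := sub_pos.2 hab
  set c := (∫ x in a..b, f x) / (b - a)
  have hc : ∫ x in a..b, f x = c * (b - a) := (div_mul_cancel₀ _ hba.ne').symm
  have hexp : ∫ x in a..b, (f x - c) ^ 2 = (∫ x in a..b, f x ^ 2) - c ^ 2 * (b - a) := by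
    have h2 : IntervalIntegrable (fun x => f x ^ 2) volume a b := (hf.pow 2).intervalIntegrable a b
    have h1 : IntervalIntegrable (fun x => 2 * c * f x) volume a b :=
      (hf.const_mul _).intervalIntegrable a b
    have hsq : (fun x => (f x - c) ^ 2) = fun x => f x ^ 2 - 2 * c * f x + c ^ 2 := by
      funext x; ring
    rw [hsq, intervalIntegral.integral_add (h2.sub h1) intervalIntegrable_const,
      intervalIntegral.integral_sub h2 h1, intervalIntegral.integral_const_mul, hc,
      intervalIntegral.integral_const, smul_eq_mul]
    ring
  have hnonneg : 0 ≤ ∫ x in a..b, (f x - c) ^ 2 :=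
    intervalIntegral.integral_nonneg hab.le fun x _ => sq_nonneg _
  rw [hc]
  nlinarith

section Integral

variable {F : Type*} [NormedAddCommGroup F] [NormedSpace ℝ F] [CompleteSpace F]

theorem norm_sub_le_integral_norm_deriv {f : ℝ → F} (hf : Differentiable ℝ f)
    (hf' : Continuous (deriv f)) {a b t : ℝ} (ht : t ∈ Icc a b) :
    ‖f t - f a‖ ≤ ∫ x in a..b, ‖deriv f x‖ := by
  rw [← intervalIntegral.integral_deriv_eq_sub (fun x _ => hf x) (hf'.intervalIntegrable a t)]
  calc ‖∫ x in a..t, deriv f x‖ ≤ ∫ x in a..t, ‖deriv f x‖ :=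
        intervalIntegral.norm_integral_le_integral_norm ht.1
    _ ≤ ∫ x in a..b, ‖deriv f x‖ :=
        intervalIntegral.integral_mono_interval le_rfl ht.1 ht.2
          (Eventually.of_forall fun _ => norm_nonneg _) (hf'.norm.intervalIntegrable a b)

theorem norm_sub_smul_integral_le {f : ℝ → F} {c : F} {T D : ℝ} (hT : 0 < T)
    (hf : IntervalIntegrable f volume 0 T) (hD : ∀ t ∈ Icc 0 T, ‖f t - c‖ ≤ D) :
    ‖c - T⁻¹ • ∫ t in 0..T, f t‖ ≤ D := by
  have hmean : c - T⁻¹ • ∫ t in 0..T, f t = T⁻¹ • ∫ t in 0..T, (c - f t) := by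
    rw [intervalIntegral.integral_sub intervalIntegrable_const hf, intervalIntegral.integral_const,
      smul_sub, sub_zero, smul_smul, inv_mul_cancel₀ hT.ne', one_smul]
  have hbound : ‖∫ t in 0..T, (c - f t)‖ ≤ D * |T - 0| :=
    intervalIntegral.norm_integral_le_of_norm_le_const fun t ht => by
      rw [norm_sub_rev]
      exact hD t (Ioc_subset_Icc_self (uIoc_of_le hT.le ▸ ht))
  rw [sub_zero, abs_of_pos hT] at hbound
  rw [hmean, norm_smul, norm_inv, Real.norm_of_nonneg hT.le, inv_mul_le_iff₀ hT, mul_comm T]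
  exact hbound

end Integral

section FixedSpace

variable {E : Type*} [NormedAddCommGroup E] [NormedSpace ℝ E]

def fixedSpace (M : E →L[ℝ] E) : Submodule ℝ E :=
  LinearMap.ker ((M - 1 : E →L[ℝ] E) : E →ₗ[ℝ] E)

@[simp]
theorem mem_fixedSpace {M : E →L[ℝ] E} {x : E} : x ∈ fixedSpace M ↔ M x = x := by
  simp [fixedSpace, sub_eq_zero]

theorem isClosed_fixedSpace (M : E →L[ℝ] E) : IsClosed (fixedSpace M : Set E) :=
  (M - 1).isClosed_ker

end FixedSpace

section FixedGap

variable {E : Type*} [NormedAddCommGroup E] [InnerProductSpace ℝ E]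

def HasFixedGap (M : E →L[ℝ] E) (δ : ℝ) : Prop :=
  ∀ x ∈ (fixedSpace M)ᗮ, δ * ‖x‖ ≤ ‖M x - x‖

theorem exists_hasFixedGap [FiniteDimensional ℝ E] (M : E →L[ℝ] E) :
    ∃ δ > 0, HasFixedGap M δ := by
  set F := fixedSpace M
  let f : Fᗮ →ₗ[ℝ] E := (M - 1 : E →L[ℝ] E).toLinearMap ∘ₗ Fᗮ.subtype
  have hf : LinearMap.ker f = ⊥ := by
    refine (Submodule.eq_bot_iff _).2 fun x hx => ?_
    have hxF : (x : E) ∈ F := LinearMap.mem_ker.2 (LinearMap.mem_ker.1 hx)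
    exact Subtype.ext (Submodule.inf_orthogonal_eq_bot F |>.le ⟨hxF, x.2⟩)
  obtain ⟨K, hK, hfK⟩ := f.exists_antilipschitzWith hf
  refine ⟨(K : ℝ)⁻¹, inv_pos.2 hK, fun x hx => ?_⟩
  have hbound := (LinearMap.toContinuousLinearMap f).bound_of_antilipschitz hfK ⟨x, hx⟩
  rw [inv_mul_le_iff₀ (NNReal.coe_pos.2 hK)]
  simpa [f] using hbound

theorem HasFixedGap.of_norm_sub_le {M M' : E →L[ℝ] E} {δ ε : ℝ} (h : HasFixedGap M δ)
    (hfix : fixedSpace M ≤ fixedSpace M') (hMM' : ‖M' - M‖ ≤ ε) :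
    HasFixedGap M' (δ - ε) := fun x hx => by
  have hMx := h x (Submodule.orthogonal_le hfix hx)
  have hdiff : ‖M x - x‖ ≤ ‖M' x - x‖ + ε * ‖x‖ :=
    calc ‖M x - x‖ = ‖(M' x - x) - (M' - M) x‖ := by congr 1; simp
      _ ≤ ‖M' x - x‖ + ‖(M' - M) x‖ := norm_sub_le _ _
      _ ≤ ‖M' x - x‖ + ε * ‖x‖ := by gcongr; exact (M' - M).le_of_opNorm_le hMM' x
  linarith

theorem HasFixedGap.norm_le [CompleteSpace E] {M : E →L[ℝ] E} {δ D : ℝ} (h : HasFixedGap M δ)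
    (hδ : 0 < δ) {a m : E} (hm : m ∈ (fixedSpace M)ᗮ) (ham : ‖a - m‖ ≤ D)
    (hMa : ‖M a - a‖ ≤ D) : ‖a‖ ≤ (1 + δ⁻¹) * D := by
  set F := fixedSpace M
  have : CompleteSpace F := (isClosed_fixedSpace M).completeSpace_coe
  set p := F.starProjection a
  have hp : ‖p‖ ≤ D := by
    have : p = F.starProjection (a - m) := by
      rw [map_sub, (F.starProjection_apply_eq_zero_iff).2 hm, sub_zero]
    exact this ▸ (F.norm_starProjection_apply_le _).trans ham
  have hq : δ * ‖a - p‖ ≤ D := by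
    have hMp : M p = p := mem_fixedSpace.1 (F.starProjection_apply_mem a)
    have : M (a - p) - (a - p) = M a - a := by rw [map_sub, hMp]; abel
    exact (h _ (F.sub_starProjection_mem_orthogonal a)).trans (this ▸ hMa)
  calc ‖a‖ = ‖p + (a - p)‖ := by rw [add_sub_cancel]
    _ ≤ ‖p‖ + ‖a - p‖ := norm_add_le _ _
    _ ≤ D + δ⁻¹ * D := by
        gcongr
        rwa [← le_div_iff₀' hδ, div_eq_inv_mul] at hq
    _ = (1 + δ⁻¹) * D := by ring

theorem HasFixedGap.integral_norm_sq_le [CompleteSpace E] {M : E →L[ℝ] E} {δ T : ℝ}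
    (hgap : HasFixedGap M δ) (hδ : 0 < δ) (hT : 0 < T) {w : ℝ → E} (hw : Differentiable ℝ w)
    (hw' : Continuous (deriv w)) (hwT : w T = M (w 0))
    (hmean : ∫ θ in 0..T, w θ ∈ (fixedSpace M)ᗮ) :
    ∫ θ in 0..T, ‖w θ‖ ^ 2 ≤ (T * (2 + δ⁻¹)) ^ 2 * ∫ θ in 0..T, ‖deriv w θ‖ ^ 2 := by
  set D := ∫ θ in 0..T, ‖deriv w θ‖
  have hD : 0 ≤ D := intervalIntegral.integral_nonneg hT.le fun _ _ => norm_nonneg _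
  have hosc : ∀ θ ∈ Icc 0 T, ‖w θ - w 0‖ ≤ D := fun θ hθ =>
    norm_sub_le_integral_norm_deriv hw hw' hθ
  have hw0 : ‖w 0‖ ≤ (1 + δ⁻¹) * D :=
    hgap.norm_le hδ (Submodule.smul_mem _ T⁻¹ hmean)
      (norm_sub_smul_integral_le hT (hw.continuous.intervalIntegrable 0 T) hosc)
      (hwT ▸ hosc T ⟨hT.le, le_rfl⟩)
  have hsup : ∀ θ ∈ uIoc 0 T, ‖‖w θ‖ ^ 2‖ ≤ ((2 + δ⁻¹) * D) ^ 2 := fun θ hθ => by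
    have hθ' : θ ∈ Icc 0 T := Ioc_subset_Icc_self (uIoc_of_le hT.le ▸ hθ)
    rw [norm_pow, norm_norm]
    gcongr
    calc ‖w θ‖ ≤ ‖w 0‖ + ‖w θ - w 0‖ := norm_le_insert' _ _
      _ ≤ (1 + δ⁻¹) * D + D := add_le_add hw0 (hosc θ hθ')
      _ = (2 + δ⁻¹) * D := by ring
  calc ∫ θ in 0..T, ‖w θ‖ ^ 2 ≤ ((2 + δ⁻¹) * D) ^ 2 * |T - 0| :=
        (le_abs_self _).trans (intervalIntegral.norm_integral_le_of_norm_le_const hsup)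
    _ = T * (2 + δ⁻¹) ^ 2 * D ^ 2 := by rw [sub_zero, abs_of_pos hT]; ring
    _ ≤ T * (2 + δ⁻¹) ^ 2 * ((T - 0) * ∫ θ in 0..T, ‖deriv w θ‖ ^ 2) := by
        gcongr; exact sq_intervalIntegral_le_mul hw'.norm hT.le
    _ = (T * (2 + δ⁻¹)) ^ 2 * ∫ θ in 0..T, ‖deriv w θ‖ ^ 2 := by ring

end FixedGap

section Exp

variable {E : Type*} [NormedAddCommGroup E] [NormedSpace ℝ E] [CompleteSpace E]

theorem hasDerivAt_exp_smul_apply (B : E →L[ℝ] E) {f : ℝ → E} {f' : E} {t : ℝ}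
    (hf : HasDerivAt f f' t) :
    HasDerivAt (fun s => NormedSpace.exp (s • B) (f s))
      (NormedSpace.exp (t • B) (f' + B (f t))) t := by
  convert (hasDerivAt_exp_smul_const B t).clm_apply hf using 1
  rw [map_add, add_comm]
  rfl

theorem exp_neg_apply_eq_self {B : E →L[ℝ] E} {x : E} (hx : NormedSpace.exp B x = x) :
    NormedSpace.exp (-B) x = x := by
  let +nondep : NormedAlgebra ℚ (E →L[ℝ] E) := .restrictScalars ℚ ℝ _
  calc NormedSpace.exp (-B) x = NormedSpace.exp (-B + B) x := by
        rw [NormedSpace.exp_add_of_commute (Commute.refl B).neg_left, mul_apply_eq_comp, hx]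
    _ = x := by rw [neg_add_cancel, NormedSpace.exp_zero, one_apply_eq_self]

theorem exp_smul_apply_eq_self_of_periodic_solutions {T : ℝ} {B C : E →L[ℝ] E}
    (hBC : ∀ u : ℝ → E, ContDiff ℝ 1 u → Function.Periodic u T →
      (∀ θ, deriv u θ + B (u θ) = 0) → ∀ θ, deriv u θ + C (u θ) = 0)
    {x : E} (hx : NormedSpace.exp (T • B) x = x) : NormedSpace.exp (T • C) x = x := by
  let +nondep : NormedAlgebra ℚ (E →L[ℝ] E) := .restrictScalars ℚ ℝ _
  set u : ℝ → E := fun θ => NormedSpace.exp (θ • -B) x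
  have hu : ∀ θ, HasDerivAt u (-B (u θ)) θ := fun θ => by
    simpa [u] using (hasDerivAt_exp_smul_const' (-B) θ).clm_apply (hasDerivAt_const θ x)
  have hderiv : deriv u = fun θ => -B (u θ) := funext fun θ => (hu θ).deriv
  have hdiff : Differentiable ℝ u := fun θ => (hu θ).differentiableAt
  have hsmooth : ContDiff ℝ 1 u :=
    contDiff_one_iff_deriv.2 ⟨hdiff, hderiv ▸ (-B).continuous.comp hdiff.continuous⟩
  have hper : Function.Periodic u T := fun θ => by
    have hxT : NormedSpace.exp (T • -B) x = x := by
      rw [smul_neg]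
      exact exp_neg_apply_eq_self hx
    have hcomm : Commute (θ • -B) (T • -B) := ((Commute.refl (-B)).smul_left θ).smul_right T
    simp only [u, add_smul, NormedSpace.exp_add_of_commute hcomm, mul_apply_eq_comp, hxT]
  have hsolB : ∀ θ, deriv u θ + B (u θ) = 0 := fun θ => by simp [hderiv]
  have hCB : ∀ θ, C (u θ) = B (u θ) := fun θ =>
    add_left_cancel ((hBC u hsmooth hper hsolB θ).trans (hsolB θ).symm)
  have hconst : ∀ θ, HasDerivAt (fun s => NormedSpace.exp (s • C) (u s)) 0 θ := fun θ => by
    simpa [hCB] using hasDerivAt_exp_smul_apply C (hu θ)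
  have hT0 := is_const_of_deriv_eq_zero (fun θ => (hconst θ).differentiableAt)
    (fun θ => (hconst θ).deriv) T 0
  have huT : u T = x := by simpa [u] using hper 0
  calc NormedSpace.exp (T • C) x = NormedSpace.exp (T • C) (u T) := by rw [huT]
    _ = NormedSpace.exp ((0 : ℝ) • C) (u 0) := hT0
    _ = x := by simp [u]

end Exp

section Unitary

variable {E : Type*} [NormedAddCommGroup E] [InnerProductSpace ℝ E] [CompleteSpace E]

theorem exp_smul_mem_unitary {B : E →L[ℝ] E} (hB : B ∈ skewAdjoint (E →L[ℝ] E)) (t : ℝ) :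
    NormedSpace.exp (t • B) ∈ unitary (E →L[ℝ] E) := by
  let +nondep : NormedAlgebra ℚ (E →L[ℝ] E) := .restrictScalars ℚ ℝ _
  exact NormedSpace.exp_mem_unitary_of_mem_skewAdjoint (skewAdjoint.smul_mem t hB)

theorem sub_self_mem_orthogonal_fixedSpace {M : E →L[ℝ] E} (hM : M ∈ unitary (E →L[ℝ] E))
    (x : E) : M x - x ∈ (fixedSpace M)ᗮ :=
  (Submodule.mem_orthogonal _ _).2 fun z hz => by
    have hinner := M.inner_map_map_of_mem_unitary hM z x
    rw [mem_fixedSpace.1 hz] at hinner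
    rw [inner_sub_right, hinner, sub_self]

theorem integral_norm_deriv_add_sq_le_of_periodic {B : E →L[ℝ] E}
    (hB : B ∈ skewAdjoint (E →L[ℝ] E)) {T δ : ℝ} (hT : 0 < T) (hδ : 0 < δ)
    (hgap : HasFixedGap (NormedSpace.exp (T • B)) δ) {u : ℝ → E}
    (hper : Function.Periodic u T) (hu : ContDiff ℝ 2 u) :
    ∫ θ in 0..T, ‖deriv u θ + B (u θ)‖ ^ 2 ≤ (T * (2 + δ⁻¹)) ^ 2 *
      ∫ θ in 0..T, ‖deriv (deriv u) θ + (2 : ℝ) • B (deriv u θ) + B (B (u θ))‖ ^ 2 := by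
  have hnorm : ∀ θ x, ‖NormedSpace.exp (θ • B) x‖ = ‖x‖ := fun θ =>
    (NormedSpace.exp (θ • B)).norm_map_of_mem_unitary (exp_smul_mem_unitary hB θ)
  have hu1 : Differentiable ℝ u := hu.differentiable (by norm_num)
  have hu2 : Differentiable ℝ (deriv u) := hu.deriv'.differentiable one_ne_zero
  have hu3 : Continuous (deriv (deriv u)) := hu.deriv'.continuous_deriv le_rfl
  have huT : u T = u 0 := by simpa using hper 0
  have hu'T : deriv u T = deriv u 0 := by simpa using hper.deriv 0
  set v : ℝ → E := fun θ => deriv u θ + B (u θ)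
  set w : ℝ → E := fun θ => NormedSpace.exp (θ • B) (v θ)
  have hw : ∀ θ, HasDerivAt w
      (NormedSpace.exp (θ • B) (deriv (deriv u) θ + (2 : ℝ) • B (deriv u θ) + B (B (u θ)))) θ :=
      fun θ => by
    have hv : HasDerivAt v (deriv (deriv u) θ + B (deriv u θ)) θ :=
      (hu2 θ).hasDerivAt.add (B.hasFDerivAt.comp_hasDerivAt θ (hu1 θ).hasDerivAt)
    convert hasDerivAt_exp_smul_apply B hv using 2
    rw [map_add, two_smul]
    abel
  have hderiv : deriv w = fun θ =>
      NormedSpace.exp (θ • B) (deriv (deriv u) θ + (2 : ℝ) • B (deriv u θ) + B (B (u θ))) :=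
    funext fun θ => (hw θ).deriv
  have hw' : Continuous (deriv w) := by
    rw [hderiv]
    have := hu1.continuous
    have := hu2.continuous
    exact (differentiable_exp_smul_const ℝ B).continuous.clm_apply (by fun_prop)
  have hwT : w T = NormedSpace.exp (T • B) (w 0) := by
    simp only [w, v, zero_smul, NormedSpace.exp_zero, one_apply_eq_self, huT, hu'T]
  have hmean : ∫ θ in 0..T, w θ ∈ (fixedSpace (NormedSpace.exp (T • B)))ᗮ := by
    have hprim : ∀ θ, HasDerivAt (fun s => NormedSpace.exp (s • B) (u s)) (w θ) θ := fun θ =>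
      hasDerivAt_exp_smul_apply B (hu1 θ).hasDerivAt
    rw [intervalIntegral.integral_eq_sub_of_hasDerivAt (fun θ _ => hprim θ)
      ((continuous_iff_continuousAt.2 fun θ => (hw θ).continuousAt).intervalIntegrable 0 T)]
    simp only [zero_smul, NormedSpace.exp_zero, one_apply_eq_self, huT]
    exact sub_self_mem_orthogonal_fixedSpace (exp_smul_mem_unitary hB T) (u 0)
  have key := hgap.integral_norm_sq_le hδ hT (fun θ => (hw θ).differentiableAt) hw' hwT hmean
  simpa only [w, hderiv, hnorm] using key

end Unitary

section Matrix

variable {n : Type*} [Fintype n] [DecidableEq n]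

theorem Matrix.continuous_toEuclideanCLM {𝕜 : Type*} [RCLike 𝕜] :
    Continuous (Matrix.toEuclideanCLM (n := n) (𝕜 := 𝕜)) :=
  LinearMap.continuous_of_finiteDimensional
    (Matrix.toEuclideanCLM (n := n) (𝕜 := 𝕜)).toAlgEquiv.toLinearEquiv.toLinearMap

theorem Matrix.toEuclideanCLM_mem_skewAdjoint {α : Matrix n n ℝ} (h : αᵀ = -α) :
    Matrix.toEuclideanCLM (𝕜 := ℝ) α ∈
      skewAdjoint (EuclideanSpace ℝ n →L[ℝ] EuclideanSpace ℝ n) := by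
  rw [skewAdjoint.mem_iff, ← map_star, Matrix.star_eq_conjTranspose,
    Matrix.conjTranspose_eq_transpose_of_trivial, h, map_neg]

end Matrix

theorem uniform_poincare_nondegenerating_general (K : ℕ)
    (A : ℕ → Matrix (Fin K) (Fin K) ℝ) (α : Matrix (Fin K) (Fin K) ℝ)
    (hAskew : ∀ n, (A n)ᵀ = -(A n))
    (hconv : Tendsto A atTop (nhds α))
    (hnondeg : ∃ N : ℕ, ∀ n ≥ N, ∀ u : ℝ → EuclideanSpace ℝ (Fin K),
      ContDiff ℝ 1 u → Function.Periodic u (2 * Real.pi) →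
      (∀ θ : ℝ, deriv u θ + matAct α (u θ) = 0) →
      ∀ θ : ℝ, deriv u θ + matAct (A n) (u θ) = 0) :
    ∃ C > 0, ∃ N' : ℕ, ∀ n ≥ N', ∀ u : ℝ → EuclideanSpace ℝ (Fin K),
      ContDiff ℝ 2 u → Function.Periodic u (2 * Real.pi) →
      (∫ θ in (0:ℝ)..(2 * Real.pi), ‖deriv u θ + matAct (A n) (u θ)‖ ^ 2) ≤
        C * ∫ θ in (0:ℝ)..(2 * Real.pi),
          ‖deriv (deriv u) θ + (2 : ℝ) • matAct (A n) (deriv u θ)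
            + matAct (A n) (matAct (A n) (u θ))‖ ^ 2 := by
  obtain ⟨N, hN⟩ := hnondeg
  set L := Matrix.toEuclideanCLM (n := Fin K) (𝕜 := ℝ)
  set M := NormedSpace.exp ((2 * π) • L α)
  have hfix : ∀ n ≥ N, fixedSpace M ≤ fixedSpace (NormedSpace.exp ((2 * π) • L (A n))) :=
    fun n hn _ hx => mem_fixedSpace.2 <|
      exp_smul_apply_eq_self_of_periodic_solutions (hN n hn) (mem_fixedSpace.1 hx)
  have hM : Tendsto (fun n => NormedSpace.exp ((2 * π) • L (A n))) atTop (nhds M) :=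
    (NormedSpace.exp_analytic (𝕂 := ℝ) _).continuousAt.tendsto.comp
      (((Matrix.continuous_toEuclideanCLM.tendsto α).comp hconv).const_smul (2 * π))
  obtain ⟨δ, hδ, hgap⟩ := exists_hasFixedGap M
  obtain ⟨N', hN'⟩ := Metric.tendsto_atTop.1 hM (δ / 2) (half_pos hδ)
  refine ⟨(2 * π * (2 + (δ / 2)⁻¹)) ^ 2, by positivity, max N N', fun n hn u hu hper => ?_⟩
  have hgap_n : HasFixedGap (NormedSpace.exp ((2 * π) • L (A n))) (δ / 2) := by
    have hclose := (hN' n (le_of_max_le_right hn)).le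
    rw [dist_eq_norm] at hclose
    simpa only [sub_half] using hgap.of_norm_sub_le (hfix n (le_of_max_le_left hn)) hclose
  exact integral_norm_deriv_add_sq_le_of_periodic
    (Matrix.toEuclideanCLM_mem_skewAdjoint (hAskew n)) two_pi_pos (half_pos hδ) hgap_n hper hu

/-- Uniform Poincaré inequality for a non-degenerating sequence of flat
connections on `S¹` (Lemma 4.5). -/
theorem uniform_poincare_nondegenerating (K : ℕ) (hK : 0 < K)
    (A : ℕ → Matrix (Fin K) (Fin K) ℝ) (α : Matrix (Fin K) (Fin K) ℝ)
    (hAskew : ∀ n, (A n)ᵀ = -(A n)) (hαskew : αᵀ = -α)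
    (hconv : Tendsto A atTop (nhds α))
    (hnondeg : ∃ N : ℕ, ∀ n ≥ N, ∀ u : ℝ → EuclideanSpace ℝ (Fin K),
      ContDiff ℝ 1 u → Function.Periodic u (2 * Real.pi) →
      (∀ θ : ℝ, deriv u θ + matAct α (u θ) = 0) →
      ∀ θ : ℝ, deriv u θ + matAct (A n) (u θ) = 0) :
    ∃ C > 0, ∃ N' : ℕ, ∀ n ≥ N', ∀ u : ℝ → EuclideanSpace ℝ (Fin K),
      ContDiff ℝ 2 u → Function.Periodic u (2 * Real.pi) →
      (∫ θ in (0:ℝ)..(2 * Real.pi), ‖deriv u θ + matAct (A n) (u θ)‖ ^ 2) ≤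
        C * ∫ θ in (0:ℝ)..(2 * Real.pi),
          ‖deriv (deriv u) θ + (2 : ℝ) • matAct (A n) (deriv u θ)
            + matAct (A n) (matAct (A n) (u θ))‖ ^ 2 :=
  uniform_poincare_nondegenerating_general K A α hAskew hconv hnondeg
end

section
/- Let K be a positive integer, α a real skew-symmetric K×K matrix, and T > 0. Let u: [−T,T] × ℝ → ℝ^K be twice continuously differentiable and 2π-periodic in the second variable θ, and let f: [−T,T] × ℝ → ℝ^K be continuous and 2π-periodic in θ, with the pointwise orthogonality ⟨∂_t u, ∂_t² u + ∂_θ² u + 2α·∂_θ u + α²·u − f⟩ = 0 at every point. Define e(t) := ∫₀^{2π} (‖∂_t u(t,θ)‖² − ‖∂_θ u(t,θ) + α·u(t,θ)‖²) dθ. Then |∫_{−T}^{T} e(t) dt − 2·e(0)·T| ≤ 2·‖Du‖_{C⁰}·∫_{−T}^{T} (∫_{−|t|}^{|t|} ∫₀^{2π} ‖f(s,θ)‖ dθ ds) dt, where ‖Du‖_{C⁰} := sup over [−T,T]×ℝ of (‖∂_t u‖² + ‖∂_θ u + α·u‖²)^{1/2}. -/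
/-!
With `P = ∂_t u` and `V = ∂_θ u + α u`, skew-symmetry of `α` makes `∂_θ + α` compatible with
the inner product, so `∫ ⟪V, (∂_θ + α) P⟫ dθ = -∫ ⟪(∂_θ + α) V, P⟫ dθ` over a period. Hence
`e'(t) = 2 ∫ ⟪∂_t u, ∂_t² u + (∂_θ + α)² u⟫ dθ = 2 ∫ ⟪∂_t u, f⟫ dθ`, which is bounded by
`2 ‖Du‖_{C⁰} ∫ ‖f(t, ·)‖ dθ`. Bounding `|e(t) - e(0)|` by the integral of this bound over
`[-|t|, |t|]` and integrating over `[-T, T]` gives the estimate.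
-/

open Real MeasureTheory Set
open scoped Matrix RealInnerProductSpace

open scoped Interval

lemma abs_sub_le_integral_of_abs_deriv_le {e e' b : ℝ → ℝ} {t : ℝ}
    (he : ∀ s ∈ Icc (-|t|) |t|, HasDerivAt e (e' s) s) (he' : ContinuousOn e' (Icc (-|t|) |t|))
    (hb : IntervalIntegrable b volume (-|t|) |t|) (hbound : ∀ s ∈ Icc (-|t|) |t|, |e' s| ≤ b s) :
    |e t - e 0| ≤ ∫ s in (-|t|)..|t|, b s := by
  have hIcc : [[-|t|, |t|]] = Icc (-|t|) |t| := uIcc_of_le (neg_le_self (abs_nonneg t))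
  have hsub : [[0, t]] ⊆ Icc (-|t|) |t| :=
    uIcc_subset_Icc ⟨by simp, abs_nonneg t⟩ ⟨neg_abs_le t, le_abs_self t⟩
  have hb_nonneg : ∀ s ∈ Icc (-|t|) |t|, 0 ≤ b s := fun s hs => (abs_nonneg _).trans (hbound s hs)
  rw [← intervalIntegral.integral_eq_sub_of_hasDerivAt (fun s hs => he s (hsub hs))
    ((he'.mono hsub).intervalIntegrable)]
  calc |∫ s in (0:ℝ)..t, e' s| ≤ |∫ s in (0:ℝ)..t, b s| :=
        Real.norm_eq_abs _ ▸ intervalIntegral.norm_integral_le_abs_of_norm_le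
          ((ae_restrict_iff' measurableSet_uIoc).2 (Filter.Eventually.of_forall fun s hs =>
            hbound s (hsub (uIoc_subset_uIcc hs))))
          (hb.mono_set (hIcc ▸ hsub))
    _ ≤ |∫ s in (-|t|)..|t|, b s| :=
        intervalIntegral.abs_integral_mono_interval
          (uIoc_subset_uIoc_of_uIcc_subset_uIcc (hIcc ▸ hsub))
          ((ae_restrict_iff' measurableSet_uIoc).2 (Filter.Eventually.of_forall fun s hs =>
            hb_nonneg s (hIcc ▸ uIoc_subset_uIcc hs))) hb
    _ = ∫ s in (-|t|)..|t|, b s :=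
        abs_of_nonneg (intervalIntegral.integral_nonneg (by simp) hb_nonneg)

lemma continuous_integral_neg_abs_abs {b : ℝ → ℝ} (hb : Continuous b) :
    Continuous fun t => ∫ s in (-|t|)..|t|, b s := by
  have hprim := intervalIntegral.continuous_primitive (μ := volume)
    (fun x y => hb.intervalIntegrable x y) 0
  refine ((hprim.comp continuous_abs).sub (hprim.comp continuous_abs.neg)).congr fun t => ?_
  exact intervalIntegral.integral_interval_sub_left (hb.intervalIntegrable _ _)
    (hb.intervalIntegrable _ _)

theorem abs_integral_sub_two_mul_le {e e' b : ℝ → ℝ} {T : ℝ} (hT : 0 ≤ T)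
    (he : ∀ t ∈ Icc (-T) T, HasDerivAt e (e' t) t) (he' : ContinuousOn e' (Icc (-T) T))
    (hb : Continuous b) (hbound : ∀ t ∈ Icc (-T) T, |e' t| ≤ b t) :
    |(∫ t in (-T)..T, e t) - 2 * e 0 * T| ≤ ∫ t in (-T)..T, ∫ s in (-|t|)..|t|, b s := by
  have hTT : -T ≤ T := neg_le_self hT
  have hIcc : ∀ t ∈ Icc (-T) T, Icc (-|t|) |t| ⊆ Icc (-T) T := fun t ht =>
    Icc_subset_Icc (neg_le_neg (abs_le.2 ht)) (abs_le.2 ht)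
  have he_cont : ContinuousOn e (Icc (-T) T) := fun t ht =>
    (he t ht).continuousAt.continuousWithinAt
  have hsplit : (∫ t in (-T)..T, e t) - 2 * e 0 * T = ∫ t in (-T)..T, (e t - e 0) := by
    rw [intervalIntegral.integral_sub (he_cont.intervalIntegrable_of_Icc hTT)
      intervalIntegrable_const, intervalIntegral.integral_const, smul_eq_mul]
    ring
  rw [hsplit]
  refine (intervalIntegral.abs_integral_le_integral_abs hTT).trans ?_
  refine intervalIntegral.integral_mono_on hTT
    ((he_cont.sub continuousOn_const).abs.intervalIntegrable_of_Icc hTT)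
    ((continuous_integral_neg_abs_abs hb).intervalIntegrable _ _) fun t ht => ?_
  exact abs_sub_le_integral_of_abs_deriv_le (fun s hs => he s (hIcc t ht hs))
    (he'.mono (hIcc t ht)) (hb.intervalIntegrable _ _) fun s hs => hbound s (hIcc t ht hs)

lemma abs_integral_inner_le {E : Type*} [NormedAddCommGroup E] [InnerProductSpace ℝ E]
    {g h : ℝ → E} {a b M : ℝ} (hab : a ≤ b) (hg : ∀ θ, ‖g θ‖ ≤ M)
    (hh : IntervalIntegrable h volume a b) :
    |∫ θ in a..b, ⟪g θ, h θ⟫| ≤ M * ∫ θ in a..b, ‖h θ‖ := by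
  rw [← intervalIntegral.integral_const_mul]
  refine intervalIntegral.norm_integral_le_of_norm_le (f := fun θ => ⟪g θ, h θ⟫) hab
    (Filter.Eventually.of_forall fun θ _ => ?_) (hh.norm.const_mul M)
  exact (abs_real_inner_le_norm _ _).trans
    (mul_le_mul_of_nonneg_right (hg θ) (norm_nonneg _))

lemma hasDerivAt_intervalIntegral_of_hasDerivAt_fst {G : Type*} [NormedAddCommGroup G]
    [NormedSpace ℝ G] [CompleteSpace G] {F F' : ℝ × ℝ → G} {a b : ℝ}
    (hF : Continuous F) (hF' : Continuous F')
    (hderiv : ∀ t θ, HasDerivAt (fun s => F (s, θ)) (F' (t, θ)) t) (t₀ : ℝ) :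
    HasDerivAt (fun t => ∫ θ in a..b, F (t, θ)) (∫ θ in a..b, F' (t₀, θ)) t₀ := by
  have hslice : ∀ {H : ℝ × ℝ → G}, Continuous H → ∀ t, Continuous fun θ => H (t, θ) :=
    fun hH t => hH.comp (continuous_const.prodMk continuous_id)
  obtain ⟨C, hC⟩ := ((isCompact_closedBall t₀ 1).prod isCompact_uIcc).exists_bound_of_continuousOn
    hF'.continuousOn
  refine (intervalIntegral.hasDerivAt_integral_of_dominated_loc_of_deriv_le (bound := fun _ => C)
    (Metric.ball_mem_nhds t₀ one_pos) (Filter.Eventually.of_forall fun t =>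
      (hslice hF t).aestronglyMeasurable) ((hslice hF t₀).intervalIntegrable _ _)
    (hslice hF' t₀).aestronglyMeasurable ?_ intervalIntegrable_const
    (Filter.Eventually.of_forall fun θ _ t _ => hderiv t θ)).2
  exact Filter.Eventually.of_forall fun θ hθ t ht =>
    hC (t, θ) ⟨Metric.ball_subset_closedBall ht, uIoc_subset_uIcc hθ⟩

section PartialDerivatives

variable {E : Type*} [NormedAddCommGroup E] [NormedSpace ℝ E] {F : ℝ × ℝ → E}

noncomputable def partialFst (F : ℝ × ℝ → E) (p : ℝ × ℝ) : E := fderiv ℝ F p (1, 0)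

noncomputable def partialSnd (F : ℝ × ℝ → E) (p : ℝ × ℝ) : E := fderiv ℝ F p (0, 1)

lemma hasDerivAt_partialFst {t θ : ℝ} (hF : DifferentiableAt ℝ F (t, θ)) :
    HasDerivAt (fun s => F (s, θ)) (partialFst F (t, θ)) t :=
  hF.hasFDerivAt.comp_hasDerivAt t ((hasDerivAt_id t).prodMk (hasDerivAt_const t θ))

lemma hasDerivAt_partialSnd {t θ : ℝ} (hF : DifferentiableAt ℝ F (t, θ)) :
    HasDerivAt (fun s => F (t, s)) (partialSnd F (t, θ)) θ :=
  hF.hasFDerivAt.comp_hasDerivAt θ ((hasDerivAt_const θ t).prodMk (hasDerivAt_id θ))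

lemma ContDiff.partialFst {m n : WithTop ℕ∞} (hF : ContDiff ℝ n F) (hmn : m + 1 ≤ n) :
    ContDiff ℝ m (partialFst F) :=
  (hF.fderiv_right hmn).clm_apply contDiff_const

lemma ContDiff.partialSnd {m n : WithTop ℕ∞} (hF : ContDiff ℝ n F) (hmn : m + 1 ≤ n) :
    ContDiff ℝ m (partialSnd F) :=
  (hF.fderiv_right hmn).clm_apply contDiff_const

lemma partialSnd_partialFst (hF : ContDiff ℝ 2 F) (p : ℝ × ℝ) :
    partialSnd (partialFst F) p = partialFst (partialSnd F) p := by
  have hD : DifferentiableAt ℝ (fderiv ℝ F) p :=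
    ((hF.fderiv_right (m := 1) le_rfl).differentiable one_ne_zero) p
  have hcomm : ∀ v w, fderiv ℝ (fun q => fderiv ℝ F q v) p w = fderiv ℝ (fderiv ℝ F) p w v :=
    fun v w => by simp [fderiv_clm_apply hD (differentiableAt_const v)]
  change fderiv ℝ (fun q => fderiv ℝ F q (1, 0)) p (0, 1)
    = fderiv ℝ (fun q => fderiv ℝ F q (0, 1)) p (1, 0)
  rw [hcomm, hcomm]
  exact (hF.contDiffAt.isSymmSndFDerivAt (by simp)).eq (0, 1) (1, 0)

lemma Function.Periodic.fderiv {v : ℝ × ℝ} (hF : Function.Periodic F v) :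
    Function.Periodic (fderiv ℝ F) v := fun p => by
  rw [← fderiv_comp_add_right]
  exact congrArg (_root_.fderiv ℝ · p) (funext hF)

lemma Function.Periodic.partialFst {v : ℝ × ℝ} (hF : Function.Periodic F v) :
    Function.Periodic (partialFst F) v := fun p => by
  simp only [_root_.partialFst, hF.fderiv p]

lemma Function.Periodic.partialSnd {v : ℝ × ℝ} (hF : Function.Periodic F v) :
    Function.Periodic (partialSnd F) v := fun p => by
  simp only [_root_.partialSnd, hF.fderiv p]

lemma deriv_curry_fst {u : ℝ → ℝ → E} (hu : Differentiable ℝ (Function.uncurry u)) (t θ : ℝ) :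
    deriv (fun s => u s θ) t = partialFst (Function.uncurry u) (t, θ) :=
  (hasDerivAt_partialFst (hu _)).deriv

lemma deriv_curry_snd {u : ℝ → ℝ → E} (hu : Differentiable ℝ (Function.uncurry u)) (t θ : ℝ) :
    deriv (u t) θ = partialSnd (Function.uncurry u) (t, θ) :=
  (hasDerivAt_partialSnd (hu _)).deriv

lemma deriv_deriv_curry_fst {u : ℝ → ℝ → E} (hu : ContDiff ℝ 2 (Function.uncurry u))
    (t θ : ℝ) :
    deriv (deriv fun s => u s θ) t = partialFst (partialFst (Function.uncurry u)) (t, θ) := by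
  rw [funext fun s => deriv_curry_fst (hu.differentiable two_ne_zero) s θ]
  exact (hasDerivAt_partialFst
    (((hu.partialFst (m := 1) le_rfl).differentiable one_ne_zero) _)).deriv

lemma deriv_deriv_curry_snd {u : ℝ → ℝ → E} (hu : ContDiff ℝ 2 (Function.uncurry u))
    (t θ : ℝ) :
    deriv (deriv (u t)) θ = partialSnd (partialSnd (Function.uncurry u)) (t, θ) := by
  rw [funext (deriv_curry_snd (hu.differentiable two_ne_zero) t)]
  exact (hasDerivAt_partialSnd
    (((hu.partialSnd (m := 1) le_rfl).differentiable one_ne_zero) _)).deriv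

end PartialDerivatives

section Energy

variable {E : Type*} [NormedAddCommGroup E] [InnerProductSpace ℝ E] (A : E →L[ℝ] E)
  {F : ℝ × ℝ → E}

-- The angular covariant derivative `∂_α = ∂_θ + α` of the connection `α dθ`.
noncomputable def covPartialSnd (F : ℝ × ℝ → E) (p : ℝ × ℝ) : E := partialSnd F p + A (F p)

noncomputable def energyDensity (F : ℝ × ℝ → E) (p : ℝ × ℝ) : ℝ :=
  ‖partialFst F p‖ ^ 2 - ‖covPartialSnd A F p‖ ^ 2

variable {A}

lemma ContDiff.covPartialSnd {m n : WithTop ℕ∞} (hF : ContDiff ℝ n F) (hmn : m + 1 ≤ n) :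
    ContDiff ℝ m (covPartialSnd A F) :=
  (hF.partialSnd hmn).add (A.contDiff.comp (hF.of_le (le_self_add.trans hmn)))

lemma Function.Periodic.covPartialSnd {v : ℝ × ℝ} (hF : Function.Periodic F v) :
    Function.Periodic (covPartialSnd A F) v := fun p => by
  simp only [_root_.covPartialSnd, hF.partialSnd p, hF p]

lemma hasFDerivAt_covPartialSnd (hF : ContDiff ℝ 2 F) (p : ℝ × ℝ) :
    HasFDerivAt (covPartialSnd A F) (fderiv ℝ (partialSnd F) p + A.comp (fderiv ℝ F p)) p :=
  (((hF.partialSnd (m := 1) le_rfl).differentiable one_ne_zero p).hasFDerivAt).add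
    (A.hasFDerivAt.comp p ((hF.differentiable two_ne_zero p).hasFDerivAt))

lemma partialFst_covPartialSnd (hF : ContDiff ℝ 2 F) (p : ℝ × ℝ) :
    partialFst (covPartialSnd A F) p = covPartialSnd A (partialFst F) p := by
  rw [partialFst, (hasFDerivAt_covPartialSnd hF p).fderiv, covPartialSnd,
    partialSnd_partialFst hF]
  rfl

lemma covPartialSnd_covPartialSnd (hF : ContDiff ℝ 2 F) (p : ℝ × ℝ) :
    covPartialSnd A (covPartialSnd A F) p
      = partialSnd (partialSnd F) p + (2 : ℝ) • A (partialSnd F p) + A (A (F p)) := by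
  rw [covPartialSnd, partialSnd, (hasFDerivAt_covPartialSnd hF p).fderiv, covPartialSnd,
    map_add, two_smul]
  simp only [add_apply, ContinuousLinearMap.comp_apply]
  rw [← partialSnd, ← partialSnd]
  abel

lemma hasDerivAt_energyDensity (hF : ContDiff ℝ 2 F) (t θ : ℝ) :
    HasDerivAt (fun s => energyDensity A F (s, θ))
      (2 * ⟪partialFst F (t, θ), partialFst (partialFst F) (t, θ)⟫
        - 2 * ⟪covPartialSnd A F (t, θ), covPartialSnd A (partialFst F) (t, θ)⟫) t := by
  have hP := hasDerivAt_partialFst (((hF.partialFst (m := 1) le_rfl).differentiable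
    one_ne_zero) (t, θ))
  have hV := hasDerivAt_partialFst (((hF.covPartialSnd (A := A) (m := 1) le_rfl).differentiable
    one_ne_zero) (t, θ))
  rw [partialFst_covPartialSnd hF] at hV
  exact hP.norm_sq.sub hV.norm_sq

lemma hasDerivAt_inner_covPartialSnd (hA : ∀ x y, ⟪A x, y⟫ = -⟪x, A y⟫) {V W : ℝ × ℝ → E}
    {t θ : ℝ} (hV : DifferentiableAt ℝ V (t, θ)) (hW : DifferentiableAt ℝ W (t, θ)) :
    HasDerivAt (fun s => ⟪V (t, s), W (t, s)⟫)
      (⟪covPartialSnd A V (t, θ), W (t, θ)⟫ + ⟪V (t, θ), covPartialSnd A W (t, θ)⟫) θ := by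
  refine ((hasDerivAt_partialSnd hV).inner ℝ (hasDerivAt_partialSnd hW)).congr_deriv ?_
  simp only [covPartialSnd, inner_add_left, inner_add_right, hA]
  ring

lemma integral_deriv_energyDensity_eq (hA : ∀ x y, ⟪A x, y⟫ = -⟪x, A y⟫)
    (hF : ContDiff ℝ 2 F) {c : ℝ} (hper : Function.Periodic F (0, c)) (t : ℝ) :
    ∫ θ in (0:ℝ)..c, (2 * ⟪partialFst F (t, θ), partialFst (partialFst F) (t, θ)⟫
        - 2 * ⟪covPartialSnd A F (t, θ), covPartialSnd A (partialFst F) (t, θ)⟫)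
      = 2 * ∫ θ in (0:ℝ)..c, ⟪partialFst F (t, θ),
          partialFst (partialFst F) (t, θ) + covPartialSnd A (covPartialSnd A F) (t, θ)⟫ := by
  have hP := hF.partialFst (m := 1) le_rfl
  have hV := hF.covPartialSnd (A := A) (m := 1) le_rfl
  have hPP : Continuous (partialFst (partialFst F)) :=
    (hP.partialFst (m := 0) (by norm_num)).continuous
  have hAP : Continuous (covPartialSnd A (partialFst F)) :=
    (hP.covPartialSnd (m := 0) (by norm_num)).continuous
  have hAV : Continuous (covPartialSnd A (covPartialSnd A F)) :=
    (hV.covPartialSnd (m := 0) (by norm_num)).continuous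
  have hPc := hP.continuous
  have hVc := hV.continuous
  have hflux : ∫ θ in (0:ℝ)..c, (⟪covPartialSnd A (covPartialSnd A F) (t, θ), partialFst F (t, θ)⟫
      + ⟪covPartialSnd A F (t, θ), covPartialSnd A (partialFst F) (t, θ)⟫) = 0 := by
    rw [intervalIntegral.integral_eq_sub_of_hasDerivAt (fun θ _ =>
      hasDerivAt_inner_covPartialSnd hA (hV.differentiable one_ne_zero _)
        (hP.differentiable one_ne_zero _)) (Continuous.intervalIntegrable (by fun_prop) _ _)]
    have hc : ((t, c) : ℝ × ℝ) = (t, 0) + (0, c) := by simp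
    rw [hc, hper.covPartialSnd, hper.partialFst, sub_self]
  have hsplit : ∀ θ, 2 * ⟪partialFst F (t, θ), partialFst (partialFst F) (t, θ)⟫
        - 2 * ⟪covPartialSnd A F (t, θ), covPartialSnd A (partialFst F) (t, θ)⟫
      = 2 * ⟪partialFst F (t, θ),
          partialFst (partialFst F) (t, θ) + covPartialSnd A (covPartialSnd A F) (t, θ)⟫
        - 2 * (⟪covPartialSnd A (covPartialSnd A F) (t, θ), partialFst F (t, θ)⟫
          + ⟪covPartialSnd A F (t, θ), covPartialSnd A (partialFst F) (t, θ)⟫) := fun θ => by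
    rw [inner_add_right, real_inner_comm (covPartialSnd A (covPartialSnd A F) (t, θ))]
    ring
  rw [intervalIntegral.integral_congr fun θ _ => hsplit θ, intervalIntegral.integral_sub
    (Continuous.intervalIntegrable (by fun_prop) _ _)
    (Continuous.intervalIntegrable (by fun_prop) _ _), intervalIntegral.integral_const_mul,
    intervalIntegral.integral_const_mul, hflux, mul_zero, sub_zero]

theorem hasDerivAt_integral_energyDensity (hA : ∀ x y, ⟪A x, y⟫ = -⟪x, A y⟫)
    (hF : ContDiff ℝ 2 F) {c : ℝ} (hper : Function.Periodic F (0, c)) (t : ℝ) :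
    HasDerivAt (fun t => ∫ θ in (0:ℝ)..c, energyDensity A F (t, θ))
      (2 * ∫ θ in (0:ℝ)..c, ⟪partialFst F (t, θ),
          partialFst (partialFst F) (t, θ) + covPartialSnd A (covPartialSnd A F) (t, θ)⟫) t := by
  have hP := hF.partialFst (m := 1) le_rfl
  have hPP : Continuous (partialFst (partialFst F)) :=
    (hP.partialFst (m := 0) (by norm_num)).continuous
  have hAP : Continuous (covPartialSnd A (partialFst F)) :=
    (hP.covPartialSnd (m := 0) (by norm_num)).continuous
  have hPc := hP.continuous
  have hVc := (hF.covPartialSnd (A := A) (m := 1) le_rfl).continuous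
  have hdens : Continuous (energyDensity A F) := by unfold energyDensity; fun_prop
  rw [← integral_deriv_energyDensity_eq hA hF hper t]
  exact hasDerivAt_intervalIntegral_of_hasDerivAt_fst hdens
    (F' := fun p => 2 * ⟪partialFst F p, partialFst (partialFst F) p⟫
      - 2 * ⟪covPartialSnd A F p, covPartialSnd A (partialFst F) p⟫)
    (by fun_prop) (hasDerivAt_energyDensity hF) t

theorem abs_integral_energyDensity_sub_le (hA : ∀ x y, ⟪A x, y⟫ = -⟪x, A y⟫)
    (hF : ContDiff ℝ 2 F) {f : ℝ × ℝ → E} (hf : Continuous f) {c T M : ℝ} (hc : 0 ≤ c)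
    (hT : 0 ≤ T) (hper : Function.Periodic F (0, c))
    (heq : ∀ t ∈ Icc (-T) T, ∀ θ, ⟪partialFst F (t, θ), partialFst (partialFst F) (t, θ)
      + covPartialSnd A (covPartialSnd A F) (t, θ)⟫ = ⟪partialFst F (t, θ), f (t, θ)⟫)
    (hM : ∀ t ∈ Icc (-T) T, ∀ θ, ‖partialFst F (t, θ)‖ ≤ M) :
    |(∫ t in (-T)..T, ∫ θ in (0:ℝ)..c, energyDensity A F (t, θ))
      - 2 * (∫ θ in (0:ℝ)..c, energyDensity A F (0, θ)) * T|
    ≤ 2 * M * ∫ t in (-T)..T, ∫ s in (-|t|)..|t|, ∫ θ in (0:ℝ)..c, ‖f (s, θ)‖ := by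
  have hPc := (hF.partialFst (m := 1) le_rfl).continuous
  refine (abs_integral_sub_two_mul_le
    (e' := fun t => 2 * ∫ θ in (0:ℝ)..c, ⟪partialFst F (t, θ), f (t, θ)⟫)
    (b := fun s => 2 * M * ∫ θ in (0:ℝ)..c, ‖f (s, θ)‖) hT (fun t ht => ?_) ?_ ?_
    (fun t ht => ?_)).trans_eq (by simp only [intervalIntegral.integral_const_mul])
  · rw [← intervalIntegral.integral_congr fun θ _ => heq t ht θ]
    exact hasDerivAt_integral_energyDensity hA hF hper t
  · exact (continuous_const.mul
      (intervalIntegral.continuous_parametric_intervalIntegral_of_continuous'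
        (hPc.inner hf) _ _)).continuousOn
  · exact continuous_const.mul
      (intervalIntegral.continuous_parametric_intervalIntegral_of_continuous' hf.norm _ _)
  · rw [abs_mul, abs_two, mul_assoc]
    gcongr
    exact abs_integral_inner_le hc (hM t ht)
      ((hf.comp (continuous_const.prodMk continuous_id)).intervalIntegrable _ _)

end Energy

lemma Matrix.inner_toEuclideanLin_of_transpose_eq_neg {n : Type*} [Fintype n] [DecidableEq n]
    {α : Matrix n n ℝ} (hα : αᵀ = -α) (x y : EuclideanSpace ℝ n) :
    ⟪α.toEuclideanLin x, y⟫ = -⟪x, α.toEuclideanLin y⟫ := by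
  rw [← LinearMap.adjoint_inner_right (α.toEuclideanLin),
    ← Matrix.toEuclideanLin_conjTranspose_eq_adjoint,
    Matrix.conjTranspose_eq_transpose_of_trivial, hα, map_neg, LinearMap.neg_apply, inner_neg_right]

theorem radial_energy_estimate_general (K : ℕ)
    (α : Matrix (Fin K) (Fin K) ℝ) (hα : αᵀ = -α) (T : ℝ) (hT : 0 < T)
    (u f : ℝ → ℝ → EuclideanSpace ℝ (Fin K))
    (hu : ContDiff ℝ 2 (Function.uncurry u))
    (hf : Continuous (Function.uncurry f))
    (huper : ∀ t : ℝ, Function.Periodic (u t) (2 * Real.pi))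
    (horth : ∀ t ∈ Icc (-T) T, ∀ θ : ℝ,
      ⟪deriv (fun s => u s θ) t,
        deriv (deriv fun s => u s θ) t
          + (deriv (deriv (u t)) θ + (2 : ℝ) • matAct α (deriv (u t) θ)
              + matAct α (matAct α (u t θ)))
          - f t θ⟫ = 0)
    (M : ℝ)
    (hM : ∀ t ∈ Icc (-T) T, ∀ θ : ℝ,
      Real.sqrt (‖deriv (fun s => u s θ) t‖ ^ 2
        + ‖deriv (u t) θ + matAct α (u t θ)‖ ^ 2) ≤ M) :
    |(∫ t in (-T)..T, ∫ θ in (0:ℝ)..(2 * Real.pi),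
        (‖deriv (fun s => u s θ) t‖ ^ 2 - ‖deriv (u t) θ + matAct α (u t θ)‖ ^ 2))
      - 2 * (∫ θ in (0:ℝ)..(2 * Real.pi),
          (‖deriv (fun s => u s θ) 0‖ ^ 2
            - ‖deriv (u 0) θ + matAct α (u 0 θ)‖ ^ 2)) * T|
    ≤ 2 * M * ∫ t in (-T)..T,
        (∫ s in (-|t|)..|t|, ∫ θ in (0:ℝ)..(2 * Real.pi), ‖f s θ‖) := by
  set U := Function.uncurry u
  set A := (Matrix.toEuclideanLin α).toContinuousLinearMap
  have hU := hu.differentiable two_ne_zero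
  have hdens : ∀ t θ, ‖deriv (fun s => u s θ) t‖ ^ 2 - ‖deriv (u t) θ + matAct α (u t θ)‖ ^ 2
      = energyDensity A U (t, θ) := fun t θ => by
    rw [deriv_curry_fst hU, deriv_curry_snd hU]; rfl
  have heq : ∀ t ∈ Icc (-T) T, ∀ θ, ⟪partialFst U (t, θ), partialFst (partialFst U) (t, θ)
      + covPartialSnd A (covPartialSnd A U) (t, θ)⟫ = ⟪partialFst U (t, θ), f t θ⟫ := by
    intro t ht θ
    have h := horth t ht θ
    rw [inner_sub_right, sub_eq_zero, deriv_curry_fst hU, deriv_deriv_curry_fst hu,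
      deriv_deriv_curry_snd hu, deriv_curry_snd hU] at h
    rwa [covPartialSnd_covPartialSnd hu]
  have hPM : ∀ t ∈ Icc (-T) T, ∀ θ, ‖partialFst U (t, θ)‖ ≤ M := fun t ht θ => by
    have h := hM t ht θ
    rw [deriv_curry_fst hU] at h
    exact ((Real.le_sqrt (norm_nonneg _) (by positivity)).2
      (le_add_of_nonneg_right (by positivity))).trans h
  have hper : Function.Periodic U (0, 2 * π) := fun ⟨t, θ⟩ => by simpa [U] using huper t θ
  simp only [hdens]
  exact abs_integral_energyDensity_sub_le (Matrix.inner_toEuclideanLin_of_transpose_eq_neg hα)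
    hu hf two_pi_pos.le hT.le hper heq hPM

/-- Corollary 4.14: the estimate of the radial energy, obtained by integrating
the almost-constancy of `e(t)` over `[−T, T]`. -/
theorem radial_energy_estimate (K : ℕ) (hK : 0 < K)
    (α : Matrix (Fin K) (Fin K) ℝ) (hα : αᵀ = -α) (T : ℝ) (hT : 0 < T)
    (u f : ℝ → ℝ → EuclideanSpace ℝ (Fin K))
    (hu : ContDiff ℝ 2 (Function.uncurry u))
    (hf : Continuous (Function.uncurry f))
    (huper : ∀ t : ℝ, Function.Periodic (u t) (2 * Real.pi))
    (hfper : ∀ t : ℝ, Function.Periodic (f t) (2 * Real.pi))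
    (horth : ∀ t ∈ Icc (-T) T, ∀ θ : ℝ,
      ⟪deriv (fun s => u s θ) t,
        deriv (deriv fun s => u s θ) t
          + (deriv (deriv (u t)) θ + (2 : ℝ) • matAct α (deriv (u t) θ)
              + matAct α (matAct α (u t θ)))
          - f t θ⟫ = 0)
    (M : ℝ)
    (hM : ∀ t ∈ Icc (-T) T, ∀ θ : ℝ,
      Real.sqrt (‖deriv (fun s => u s θ) t‖ ^ 2
        + ‖deriv (u t) θ + matAct α (u t θ)‖ ^ 2) ≤ M) :
    |(∫ t in (-T)..T, ∫ θ in (0:ℝ)..(2 * Real.pi),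
        (‖deriv (fun s => u s θ) t‖ ^ 2 - ‖deriv (u t) θ + matAct α (u t θ)‖ ^ 2))
      - 2 * (∫ θ in (0:ℝ)..(2 * Real.pi),
          (‖deriv (fun s => u s θ) 0‖ ^ 2
            - ‖deriv (u 0) θ + matAct α (u 0 θ)‖ ^ 2)) * T|
    ≤ 2 * M * ∫ t in (-T)..T,
        (∫ s in (-|t|)..|t|, ∫ θ in (0:ℝ)..(2 * Real.pi), ‖f s θ‖) :=
  radial_energy_estimate_general K α hα T hT u f hu hf huper horth M hM
end
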